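/- Suppose κ₁ > 0 > κ₂ and a, A, B > 0 satisfy: for all τ ≥ T₀ ≥ 0, a ≤ C·e^{τκ₁}·A + C·e^{τκ₂}·B. Then, with α₁ = -κ₂/(κ₁ - κ₂) ∈ (0,1), one has a ≤ (2C)^{α₁+1}·e^{T₀ κ₁}·B^{1-α₁}·A^{α₁} whenever a ≤ B. -/

import Mathlib

/-!
Once `C e^{τκ₂} B ≤ a/2` the `B`-term can be absorbed, leaving `a ≤ 2C e^{τκ₁} A`; this
happens for every `τ ≥ max T₀ (log (a / (2CB)) / κ₂)`, and in logarithms everything is linear.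
If the maximum is `T₀`, interpolating `a ≤ 2C e^{T₀κ₁} A` with `a ≤ B` gives the bound; otherwise
`e^{τκ₂} = a / (2CB)` and solving the resulting inequality for `log a` gives
`a ≤ 2C A^{α₁} B^{1-α₁}`.
-/

open Real

theorem le_interpolation_of_forall_le {x y z c T κ₁ κ₂ : ℝ} (hc : 0 ≤ c) (hT : 0 ≤ T)
    (hκ₁ : 0 < κ₁) (hκ₂ : κ₂ < 0) (hxz : x ≤ z)
    (h : ∀ τ, T ≤ τ → τ * κ₂ ≤ x - c - z → x ≤ c + τ * κ₁ + y) :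
    x ≤ (-κ₂ / (κ₁ - κ₂) + 1) * c + T * κ₁ + (1 - -κ₂ / (κ₁ - κ₂)) * z +
      -κ₂ / (κ₁ - κ₂) * y := by
  have hd : 0 < κ₁ - κ₂ := by linarith
  set α := -κ₂ / (κ₁ - κ₂)
  have hα₀ : 0 ≤ α := (div_pos (neg_pos.mpr hκ₂) hd).le
  have hα₁ : 0 ≤ 1 - α := sub_nonneg.mpr ((div_le_one hd).mpr (by linarith))
  have hακ : α * (κ₁ - κ₂) = -κ₂ := div_mul_cancel₀ _ hd.ne'
  have hTκ : 0 ≤ T * κ₁ := mul_nonneg hT hκ₁.le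
  rcases le_total ((x - c - z) / κ₂) T with hτ | hτ
  · have hx := h T le_rfl ((div_le_iff_of_neg hκ₂).mp hτ)
    linarith [mul_le_mul_of_nonneg_left hx hα₀, mul_le_mul_of_nonneg_left hxz hα₁,
      mul_nonneg hα₁ hTκ]
  · set τ := (x - c - z) / κ₂
    have hτκ : τ * κ₂ = x - c - z := div_mul_cancel₀ _ hκ₂.ne
    have hx := h τ hτ hτκ.le
    have : τ * κ₂ ≤ α * (y - z) :=
      calc τ * κ₂ = α * (-(τ * (κ₁ - κ₂))) := by linear_combination τ * hακ
        _ ≤ α * (y - z) := mul_le_mul_of_nonneg_left (by linarith) hα₀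
    linarith [mul_nonneg hα₀ hc]

theorem log_le_of_le_add_of_le_half {a A B C τ κ₁ κ₂ : ℝ} (ha : 0 < a) (hA : 0 < A)
    (hB : 0 < B) (hC : 0 < C)
    (h : a ≤ C * exp (τ * κ₁) * A + C * exp (τ * κ₂) * B)
    (hτ : τ * κ₂ ≤ log a - log (2 * C) - log B) :
    log a ≤ log (2 * C) + τ * κ₁ + log A := by
  have hsmall : C * exp (τ * κ₂) * B ≤ a / 2 := by
    have := exp_le_exp.mpr hτ
    rw [exp_sub, exp_sub, exp_log ha, exp_log (by positivity), exp_log hB,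
      le_div_iff₀ hB, le_div_iff₀ (by positivity)] at this
    linarith
  rw [log_le_iff_le_exp ha, exp_add, exp_add, exp_log (by positivity), exp_log hA]
  linarith

theorem local_interpolation_step (a A B C T₀ κ₁ κ₂ : ℝ)
    (ha : 0 < a) (hA : 0 < A) (hB : 0 < B) (hC : 1 ≤ C) (hT₀ : 0 ≤ T₀)
    (hκ₁ : 0 < κ₁) (hκ₂ : κ₂ < 0)
    (h : ∀ τ : ℝ, T₀ ≤ τ → a ≤ C * Real.exp (τ * κ₁) * A + C * Real.exp (τ * κ₂) * B)
    (haB : a ≤ B) :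
    a ≤ (2 * C) ^ (-κ₂ / (κ₁ - κ₂) + 1) * Real.exp (T₀ * κ₁) *
        B ^ (1 - (-κ₂ / (κ₁ - κ₂))) * A ^ (-κ₂ / (κ₁ - κ₂)) := by
  have h2C : 0 < 2 * C := by linarith
  rw [rpow_def_of_pos h2C, rpow_def_of_pos hB, rpow_def_of_pos hA, ← exp_add, ← exp_add,
    ← exp_add, ← log_le_iff_le_exp ha]
  have hlog := le_interpolation_of_forall_le (log_nonneg (by linarith : (1 : ℝ) ≤ 2 * C)) hT₀
    hκ₁ hκ₂ (log_le_log ha haB)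
    (fun τ hτ ↦ log_le_of_le_add_of_le_half ha hA hB (by linarith) (h τ hτ))
  linarith
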